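/- Let X be a vector space with a complete invariant metric d satisfying d(λx, λy) ≤ λ d(x,y) for all λ ∈ [0,1) and all x,y ∈ X. A function f : [a,b] → X is Riemann integrable if and only if there exists x̄ ∈ X with the property: for every ε > 0 there exists a partition Δ_ε of [a,b] such that d(f(Δ), x̄) < ε for every tagged partition Δ of [a,b] that refines Δ_ε. -/

import Mathlib

/-!
Translation invariance makes `‖x‖ := d(0, x)` a group norm, and the scaling inequality, applied
to `λ / n` with `n > λ`, gives `‖λ • x‖ ≤ λ ‖x‖` for every `λ ≥ 0`; so `X` is a real normed space.

If `f` is Riemann integrable, any partition of mesh `< δ` works as `Δ_ε`, because refining does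
not increase the mesh. Conversely, changing a single tag of a refinement of `Δ_1` moves the
Riemann sum by `(tᵢ₊₁ - tᵢ) • (f x - f sᵢ)`, so the criterion forces `‖f‖ ≤ M` on `[a, b]`.
Inserting one point into a partition of mesh `< δ` changes its Riemann sum by at most `2 M δ`;
inserting the points of `Δ_{ε/2}` one by one into a partition of small enough mesh therefore
produces a refinement of `Δ_{ε/2}` whose Riemann sum is within `ε / 2` of the original one.
-/

open Set MeasureTheory

/-- A tagged partition of `[a,b]`: points `a = t 0 < t 1 < ⋯ < t n = b`
with tags `s i ∈ [t i, t (i+1)]`. -/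
structure TaggedPartition (a b : ℝ) where
  n : ℕ
  t : ℕ → ℝ
  s : ℕ → ℝ
  npos : 0 < n
  left : t 0 = a
  right : t n = b
  mono : ∀ i < n, t i < t (i + 1)
  tag_mem : ∀ i < n, s i ∈ Set.Icc (t i) (t (i + 1))

/-- The mesh of the partition is `< δ`. -/
def TaggedPartition.MeshLT {a b : ℝ} (P : TaggedPartition a b) (δ : ℝ) : Prop :=
  ∀ i < P.n, P.t (i + 1) - P.t i < δ

/-- The set of partition points of a tagged partition. -/
def TaggedPartition.points {a b : ℝ} (P : TaggedPartition a b) : Set ℝ :=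
  {x | ∃ i ≤ P.n, P.t i = x}

/-- The Riemann sum `f(Δ) = Σᵢ (tᵢ₊₁ - tᵢ) • f(sᵢ)`. -/
def riemannSum {X : Type*} [AddCommGroup X] [Module ℝ X]
    (f : ℝ → X) {a b : ℝ} (P : TaggedPartition a b) : X :=
  ∑ i ∈ Finset.range P.n, (P.t (i + 1) - P.t i) • f (P.s i)

/-- `f` has Riemann integral `x` on `[a,b]` (mesh-based definition, metric `dist`). -/
def HasRiemannIntegral {X : Type*} [MetricSpace X] [AddCommGroup X] [Module ℝ X]
    (f : ℝ → X) (a b : ℝ) (x : X) : Prop :=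
  ∀ ε > 0, ∃ δ > 0, ∀ P : TaggedPartition a b, P.MeshLT δ →
    dist (riemannSum f P) x < ε

theorem Finset.sum_range_succ_sub_sum_range_of_shift {X : Type*} [AddCommGroup X]
    {g h : ℕ → X} {i n : ℕ} (hin : i < n) (hlt : ∀ k < i, g k = h k)
    (hgt : ∀ k, i < k → g (k + 1) = h k) :
    ∑ k ∈ Finset.range (n + 1), g k - ∑ k ∈ Finset.range n, h k = g i + g (i + 1) - h i := by
  induction n, hin using Nat.le_induction with
  | base =>
    have hhead : ∑ k ∈ Finset.range i, g k = ∑ k ∈ Finset.range i, h k :=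
      Finset.sum_congr rfl fun k hk => hlt k (Finset.mem_range.1 hk)
    simp only [Finset.sum_range_succ, hhead]
    abel
  | succ n hn ih =>
    rw [Finset.sum_range_succ, Finset.sum_range_succ h, hgt n hn, ← ih]
    abel

theorem norm_smul_le_of_norm_smul_le_of_lt_one {E : Type*} [SeminormedAddCommGroup E] [Module ℝ E]
    (h : ∀ l : ℝ, 0 ≤ l → l < 1 → ∀ x : E, ‖l • x‖ ≤ l * ‖x‖) (l : ℝ) (x : E) :
    ‖l • x‖ ≤ ‖l‖ * ‖x‖ := by
  wlog hl : 0 ≤ l generalizing l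
  · simpa using this (-l) (by linarith)
  obtain ⟨n, hn⟩ := exists_nat_gt l
  have hn0 : (0 : ℝ) < n := hl.trans_lt hn
  calc ‖l • x‖ = ‖n • ((l / n) • x)‖ := by
        rw [← Nat.cast_smul_eq_nsmul ℝ, smul_smul, mul_div_cancel₀ _ hn0.ne']
    _ ≤ n * ‖(l / n) • x‖ := norm_nsmul_le
    _ ≤ n * ((l / n) * ‖x‖) := by
        gcongr
        exact h _ (by positivity) ((div_lt_one hn0).2 hn) x
    _ = ‖l‖ * ‖x‖ := by
        rw [Real.norm_of_nonneg hl]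
        field_simp

namespace TaggedPartition

variable {a b : ℝ} (P : TaggedPartition a b)

theorem t_strictMonoOn : StrictMonoOn P.t (Iic P.n) :=
  strictMonoOn_Iic_of_lt_succ fun m hm => P.mono m hm

theorem t_lt_t {i j : ℕ} (hij : i < j) (hj : j ≤ P.n) : P.t i < P.t j :=
  P.t_strictMonoOn (hij.le.trans hj) hj hij

theorem t_le_t {i j : ℕ} (hij : i ≤ j) (hj : j ≤ P.n) : P.t i ≤ P.t j :=
  P.t_strictMonoOn.monotoneOn (hij.trans hj) hj hij

theorem t_mem_Icc {i : ℕ} (hi : i ≤ P.n) : P.t i ∈ Icc a b :=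
  ⟨by simpa [P.left] using P.t_le_t i.zero_le hi, by simpa [P.right] using P.t_le_t hi le_rfl⟩

theorem s_mem_Icc {i : ℕ} (hi : i < P.n) : P.s i ∈ Icc a b :=
  ⟨(P.t_mem_Icc hi.le).1.trans (P.tag_mem i hi).1, (P.tag_mem i hi).2.trans (P.t_mem_Icc hi).2⟩

theorem lt_of_t_lt_t {i j : ℕ} (hi : i ≤ P.n) (h : P.t i < P.t j) : i < j :=
  not_le.1 fun hji => (P.t_le_t hji hi).not_gt h

theorem exists_mem_Ico {x : ℝ} (hx : x ∈ Ico a b) :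
    ∃ i < P.n, x ∈ Ico (P.t i) (P.t (i + 1)) := by
  classical
  have hlast : x < P.t (P.n - 1 + 1) := by
    rw [Nat.sub_one_add_one_eq_of_pos P.npos, P.right]
    exact hx.2
  have hex : ∃ i, x < P.t (i + 1) := ⟨_, hlast⟩
  refine ⟨Nat.find hex, (Nat.find_min' hex hlast).trans_lt (Nat.sub_lt P.npos one_pos), ?_,
    Nat.find_spec hex⟩
  rcases Nat.eq_zero_or_eq_succ_pred (Nat.find hex) with h | h
  · rw [h, P.left]
    exact hx.1
  · rw [h]
    exact not_lt.1 (Nat.find_min hex (h ▸ Nat.pred_lt_self (by omega)))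

theorem exists_mem_Icc {x : ℝ} (hx : x ∈ Icc a b) :
    ∃ i < P.n, x ∈ Icc (P.t i) (P.t (i + 1)) := by
  rcases hx.2.eq_or_lt with rfl | hxb
  · refine ⟨P.n - 1, Nat.sub_lt P.npos one_pos, ?_⟩
    rw [Nat.sub_one_add_one_eq_of_pos P.npos, P.right]
    exact ⟨(P.t_mem_Icc (Nat.sub_le _ _)).2, le_rfl⟩
  · obtain ⟨i, hi, hxi⟩ := P.exists_mem_Ico ⟨hx.1, hxb⟩
    exact ⟨i, hi, Ico_subset_Icc_self hxi⟩

theorem points_subset_Icc : P.points ⊆ Icc a b := by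
  rintro _ ⟨i, hi, rfl⟩
  exact P.t_mem_Icc hi

theorem points_eq : P.points = ↑((Finset.range (P.n + 1)).image P.t) := by
  ext x
  simp [points]

theorem MeshLT.of_points_subset {P Q : TaggedPartition a b} {δ : ℝ} (hP : P.MeshLT δ)
    (hPQ : P.points ⊆ Q.points) : Q.MeshLT δ := by
  intro i hi
  obtain ⟨j, hj, hij⟩ := P.exists_mem_Ico (Ico_subset_Ico_right (Q.t_mem_Icc hi).2
    ⟨(Q.t_mem_Icc hi.le).1, Q.t_lt_t (Nat.lt_succ_self i) hi⟩)
  obtain ⟨m, hm, hmj⟩ := hPQ ⟨j + 1, hj, rfl⟩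
  have him : i < m := Q.lt_of_t_lt_t hi.le (hmj ▸ hij.2)
  have : Q.t (i + 1) ≤ P.t (j + 1) := hmj ▸ Q.t_le_t him hm
  linarith [hP j hj, hij.1]

theorem exists_meshLT (hab : a < b) {δ : ℝ} (hδ : 0 < δ) :
    ∃ P : TaggedPartition a b, P.MeshLT δ := by
  obtain ⟨n, hn⟩ := exists_nat_gt ((b - a) / δ)
  have hn0 : (0 : ℝ) < n := (div_pos (sub_pos.2 hab) hδ).trans hn
  have hh : 0 < (b - a) / n := div_pos (sub_pos.2 hab) hn0
  refine ⟨⟨n, fun i => a + i * ((b - a) / n), fun i => a + i * ((b - a) / n),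
    Nat.cast_pos.1 hn0, by simp, by field_simp; ring, fun i _ => ?_, fun i _ => ?_⟩, fun i _ => ?_⟩
  · push_cast; linarith
  · push_cast; constructor <;> linarith
  · push_cast
    rw [div_lt_iff₀ hδ] at hn
    rw [show a + (i + 1) * ((b - a) / n) - (a + i * ((b - a) / n)) = (b - a) / n by ring,
      div_lt_iff₀ hn0]
    linarith

def updateTag (j : ℕ) (x : ℝ) (hx : x ∈ Icc (P.t j) (P.t (j + 1))) : TaggedPartition a b :=
  { P with
    s := Function.update P.s j x
    tag_mem := fun k hk => by
      rcases eq_or_ne k j with rfl | hkj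
      · simpa using hx
      · simpa [hkj] using P.tag_mem k hk }

theorem points_updateTag (j : ℕ) (x : ℝ) (hx : x ∈ Icc (P.t j) (P.t (j + 1))) :
    (P.updateTag j x hx).points = P.points := rfl

-- Both halves of the split interval get the tag `c`, so the Riemann sum changes by
-- `(tᵢ₊₁ - tᵢ) • (f c - f sᵢ)` only.
def insertPoint (i : ℕ) (hi : i < P.n) (c : ℝ) (hc : c ∈ Ioo (P.t i) (P.t (i + 1))) :
    TaggedPartition a b where
  n := P.n + 1
  t j := if j ≤ i then P.t j else if j = i + 1 then c else P.t (j - 1)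
  s j := if j < i then P.s j else if j ≤ i + 1 then c else P.s (j - 1)
  npos := Nat.succ_pos _
  left := by simp [P.left]
  right := by simp [show ¬ P.n + 1 ≤ i by omega, show P.n ≠ i by omega, P.right]
  mono j hj := by
    rcases lt_trichotomy j i with h | rfl | h
    · simpa [h.le, show j + 1 ≤ i by omega] using P.mono j (by omega)
    · simpa using hc.1
    · obtain ⟨k, rfl⟩ : ∃ k, j = k + 1 := ⟨j - 1, by omega⟩
      rcases eq_or_ne k i with rfl | hk
      · simpa using hc.2
      · simpa [show ¬ k + 1 ≤ i by omega, hk, show k + 1 ≠ i by omega, show ¬ k ≤ i by omega,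
          show ¬ k + 1 < i by omega] using P.mono k (by omega)
  tag_mem j hj := by
    rcases lt_trichotomy j i with h | rfl | h
    · simpa [h, h.le, show j + 1 ≤ i by omega] using P.tag_mem j (by omega)
    · simpa using hc.1.le
    · obtain ⟨k, rfl⟩ : ∃ k, j = k + 1 := ⟨j - 1, by omega⟩
      rcases eq_or_ne k i with rfl | hk
      · simpa using hc.2.le
      · simpa [show ¬ k + 1 < i by omega, show ¬ k + 1 ≤ i by omega, hk,
          show ¬ k ≤ i by omega, show k + 1 ≠ i by omega] using P.tag_mem k (by omega)

theorem points_subset_insertPoint (i : ℕ) (hi : i < P.n) (c : ℝ)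
    (hc : c ∈ Ioo (P.t i) (P.t (i + 1))) : P.points ⊆ (P.insertPoint i hi c hc).points := by
  rintro _ ⟨k, hk, rfl⟩
  by_cases hki : k ≤ i
  · exact ⟨k, by simp only [insertPoint]; omega, by simp [insertPoint, hki]⟩
  · exact ⟨k + 1, by simp only [insertPoint]; omega,
      by simp [insertPoint, show ¬ k + 1 ≤ i by omega, show k ≠ i by omega]⟩

theorem mem_points_insertPoint (i : ℕ) (hi : i < P.n) (c : ℝ)
    (hc : c ∈ Ioo (P.t i) (P.t (i + 1))) : c ∈ (P.insertPoint i hi c hc).points :=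
  ⟨i + 1, by simp only [insertPoint]; omega, by simp [insertPoint]⟩

variable {X : Type*} [AddCommGroup X] [Module ℝ X]

theorem riemannSum_updateTag_sub (f : ℝ → X) {j : ℕ} (hj : j < P.n) (x : ℝ)
    (hx : x ∈ Icc (P.t j) (P.t (j + 1))) :
    riemannSum f (P.updateTag j x hx) - riemannSum f P =
      (P.t (j + 1) - P.t j) • (f x - f (P.s j)) := by
  simp only [riemannSum, updateTag, ← Finset.sum_sub_distrib, ← smul_sub]
  rw [Finset.sum_eq_single_of_mem j (Finset.mem_range.2 hj) fun k _ hkj => by simp [hkj]]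
  simp

theorem riemannSum_insertPoint_sub (f : ℝ → X) (i : ℕ) (hi : i < P.n) (c : ℝ)
    (hc : c ∈ Ioo (P.t i) (P.t (i + 1))) :
    riemannSum f (P.insertPoint i hi c hc) - riemannSum f P =
      (P.t (i + 1) - P.t i) • (f c - f (P.s i)) := by
  refine (Finset.sum_range_succ_sub_sum_range_of_shift hi ?_ ?_).trans ?_
  · intro k hk
    simp [insertPoint, hk, hk.le, show k + 1 ≤ i by omega]
  · intro k hk
    simp [insertPoint, show ¬ k + 1 ≤ i by omega, show k ≠ i by omega, show ¬ k ≤ i by omega,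
      show ¬ k + 1 < i by omega, show k + 1 ≠ i by omega]
  · simp [insertPoint, ← add_smul, smul_sub]

end TaggedPartition

def HasRefinementIntegral {X : Type*} [MetricSpace X] [AddCommGroup X] [Module ℝ X]
    (f : ℝ → X) (a b : ℝ) (x : X) : Prop :=
  ∀ ε > 0, ∃ P₀ : TaggedPartition a b, ∀ P : TaggedPartition a b, P₀.points ⊆ P.points →
    dist (riemannSum f P) x < ε

theorem HasRiemannIntegral.hasRefinementIntegral {X : Type*} [MetricSpace X] [AddCommGroup X]
    [Module ℝ X] {f : ℝ → X} {a b : ℝ} {x : X} (hab : a < b) (h : HasRiemannIntegral f a b x) :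
    HasRefinementIntegral f a b x := by
  intro ε hε
  obtain ⟨δ, hδ, hδP⟩ := h ε hε
  obtain ⟨P₀, hP₀⟩ := TaggedPartition.exists_meshLT hab hδ
  exact ⟨P₀, fun P hP => hδP P (hP₀.of_points_subset hP)⟩

section NormedSpace

variable {X : Type*} [NormedAddCommGroup X] [NormedSpace ℝ X] {f : ℝ → X} {a b : ℝ}

theorem HasRefinementIntegral.exists_norm_le {xbar : X} (h : HasRefinementIntegral f a b xbar) :
    ∃ M, ∀ x ∈ Icc a b, ‖f x‖ ≤ M := by
  obtain ⟨P, hP⟩ := h 1 one_pos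
  have hlen : ∀ j < P.n, 0 < P.t (j + 1) - P.t j := fun j hj => sub_pos.2 (P.mono j hj)
  refine ⟨∑ j ∈ Finset.range P.n, (‖f (P.s j)‖ + 2 / (P.t (j + 1) - P.t j)), fun x hx => ?_⟩
  obtain ⟨j, hj, hxj⟩ := P.exists_mem_Icc hx
  have hsmall : (P.t (j + 1) - P.t j) * ‖f x - f (P.s j)‖ < 2 :=
    calc (P.t (j + 1) - P.t j) * ‖f x - f (P.s j)‖
        = dist (riemannSum f (P.updateTag j x hxj)) (riemannSum f P) := by
          rw [dist_eq_norm, P.riemannSum_updateTag_sub f hj, norm_smul_of_nonneg (hlen j hj).le]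
      _ ≤ dist (riemannSum f (P.updateTag j x hxj)) xbar + dist (riemannSum f P) xbar :=
          dist_triangle_right _ _ _
      _ < 1 + 1 := add_lt_add (hP _ (P.points_updateTag j x hxj).ge) (hP P subset_rfl)
      _ = 2 := one_add_one_eq_two
  calc ‖f x‖ ≤ ‖f (P.s j)‖ + ‖f x - f (P.s j)‖ := norm_le_norm_add_norm_sub' _ _
    _ ≤ ‖f (P.s j)‖ + 2 / (P.t (j + 1) - P.t j) := by
        gcongr
        exact ((lt_div_iff₀' (hlen j hj)).2 hsmall).le
    _ ≤ _ := Finset.single_le_sum (f := fun k => ‖f (P.s k)‖ + 2 / (P.t (k + 1) - P.t k))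
        (fun k hk => add_nonneg (norm_nonneg _)
        (div_nonneg zero_le_two (hlen k (Finset.mem_range.1 hk)).le)) (Finset.mem_range.2 hj)

section Bounded

variable {M δ : ℝ} (hM : ∀ x ∈ Icc a b, ‖f x‖ ≤ M)
include hM

theorem exists_refinement_mem_dist_le {P : TaggedPartition a b} (hP : P.MeshLT δ) {c : ℝ}
    (hc : c ∈ Icc a b) : ∃ Q : TaggedPartition a b, P.points ⊆ Q.points ∧ c ∈ Q.points ∧
      dist (riemannSum f Q) (riemannSum f P) ≤ 2 * M * δ := by
  have hM0 : 0 ≤ M := (norm_nonneg _).trans (hM c hc)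
  have hδ : 0 < δ := (sub_pos.2 (P.mono 0 P.npos)).trans (hP 0 P.npos)
  by_cases hcP : c ∈ P.points
  · exact ⟨P, subset_rfl, hcP, by rw [dist_self]; positivity⟩
  obtain ⟨i, hi, hci⟩ := P.exists_mem_Icc hc
  have hc' : c ∈ Ioo (P.t i) (P.t (i + 1)) :=
    ⟨hci.1.lt_of_ne fun h => hcP ⟨i, hi.le, h⟩, hci.2.lt_of_ne fun h => hcP ⟨i + 1, hi, h.symm⟩⟩
  refine ⟨P.insertPoint i hi c hc', P.points_subset_insertPoint i hi c hc',
    P.mem_points_insertPoint i hi c hc', ?_⟩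
  rw [dist_eq_norm, P.riemannSum_insertPoint_sub f i hi c hc',
    norm_smul_of_nonneg (sub_pos.2 (P.mono i hi)).le]
  calc (P.t (i + 1) - P.t i) * ‖f c - f (P.s i)‖ ≤ δ * (M + M) :=
        mul_le_mul (hP i hi).le (norm_sub_le_of_le (hM c hc) (hM _ (P.s_mem_Icc hi)))
          (norm_nonneg _) hδ.le
    _ = 2 * M * δ := by ring

theorem exists_refinement_subset_dist_le {P : TaggedPartition a b} (hP : P.MeshLT δ)
    (S : Finset ℝ) (hS : ↑S ⊆ Icc a b) : ∃ Q : TaggedPartition a b, P.points ⊆ Q.points ∧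
      ↑S ⊆ Q.points ∧ dist (riemannSum f Q) (riemannSum f P) ≤ S.card * (2 * M * δ) := by
  induction S using Finset.induction_on with
  | empty => exact ⟨P, subset_rfl, by simp, by simp⟩
  | insert c S hcS ih =>
    rw [Finset.coe_insert, insert_subset_iff] at hS
    obtain ⟨Q, hPQ, hSQ, hQ⟩ := ih hS.2
    obtain ⟨R, hQR, hcR, hR⟩ := exists_refinement_mem_dist_le hM (hP.of_points_subset hPQ) hS.1
    refine ⟨R, hPQ.trans hQR, ?_, ?_⟩
    · rw [Finset.coe_insert]
      exact insert_subset hcR (hSQ.trans hQR)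
    · rw [Finset.card_insert_of_notMem hcS, Nat.cast_succ]
      linarith [dist_triangle (riemannSum f R) (riemannSum f Q) (riemannSum f P)]

end Bounded

theorem HasRefinementIntegral.hasRiemannIntegral {xbar : X}
    (h : HasRefinementIntegral f a b xbar) : HasRiemannIntegral f a b xbar := by
  obtain ⟨M, hM⟩ := h.exists_norm_le
  intro ε hε
  obtain ⟨P₀, hP₀⟩ := h (ε / 2) (half_pos hε)
  set S := (Finset.range (P₀.n + 1)).image P₀.t
  obtain ⟨δ, hδ, hSδ⟩ := exists_pos_mul_lt (half_pos hε) (S.card * (2 * M))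
  refine ⟨δ, hδ, fun P hP => ?_⟩
  obtain ⟨Q, -, hSQ, hQP⟩ :=
    exists_refinement_subset_dist_le hM hP S (P₀.points_eq ▸ P₀.points_subset_Icc)
  calc dist (riemannSum f P) xbar
      ≤ dist (riemannSum f Q) (riemannSum f P) + dist (riemannSum f Q) xbar :=
        dist_triangle_left _ _ _
    _ < ε / 2 + ε / 2 := add_lt_add_of_le_of_lt (by linarith) (hP₀ Q (P₀.points_eq ▸ hSQ))
    _ = ε := add_halves ε

end NormedSpace

theorem riemannIntegrable_iff_refinement_general
    {X : Type*} [MetricSpace X] [AddCommGroup X] [Module ℝ X]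
    (hinv : ∀ x y z : X, dist (x + z) (y + z) = dist x y)
    (hscale : ∀ l : ℝ, 0 ≤ l → l < 1 → ∀ x y : X, dist (l • x) (l • y) ≤ l * dist x y)
    (a b : ℝ) (hab : a < b) (f : ℝ → X) :
    (∃ x, HasRiemannIntegral f a b x) ↔
      ∃ xbar : X, ∀ ε > 0, ∃ P₀ : TaggedPartition a b,
        ∀ P : TaggedPartition a b, P₀.points ⊆ P.points →
          dist (riemannSum f P) xbar < ε := by
  refine ⟨fun ⟨x, hx⟩ => ⟨x, hx.hasRefinementIntegral hab⟩, fun ⟨xbar, hxbar⟩ => ⟨xbar, ?_⟩⟩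
  let _ : Norm X := ⟨dist 0⟩
  let _ : NormedAddCommGroup X := NormedAddCommGroup.ofAddDist' (fun _ => rfl) fun x y z => by
    rw [add_comm z x, add_comm z y, hinv]
  let _ : NormedSpace ℝ X := ⟨norm_smul_le_of_norm_smul_le_of_lt_one fun l hl0 hl1 x => by
    simpa using hscale l hl0 hl1 0 x⟩
  exact HasRefinementIntegral.hasRiemannIntegral hxbar

/-- Riemann integrability is equivalent to the refinement-based
criterion. -/
theorem riemannIntegrable_iff_refinement
    {X : Type*} [MetricSpace X] [AddCommGroup X] [Module ℝ X] [CompleteSpace X]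
    (hinv : ∀ x y z : X, dist (x + z) (y + z) = dist x y)
    (hscale : ∀ l : ℝ, 0 ≤ l → l < 1 → ∀ x y : X, dist (l • x) (l • y) ≤ l * dist x y)
    (a b : ℝ) (hab : a < b) (f : ℝ → X) :
    (∃ x, HasRiemannIntegral f a b x) ↔
      ∃ xbar : X, ∀ ε > 0, ∃ P₀ : TaggedPartition a b,
        ∀ P : TaggedPartition a b, P₀.points ⊆ P.points →
          dist (riemannSum f P) xbar < ε :=
  riemannIntegrable_iff_refinement_general hinv hscale a b hab f
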